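/- arXiv:1506.03944 — 3 statements merged into one kernel-verified Lean document; each statement's English description precedes it below -/
import Mathlib

section
/- Let n ≥ 2. For every function δ : {(r,p) : 1 ≤ p ≤ r ≤ n} → {0,1} there exists an ordered set partition (A_1|…|A_t) of the linearly ordered set {1,…,n} such that the value δ(|A_1∪…∪A_{i(x)}|, rank of x in A_1∪…∪A_{i(x)}) is the same for all x ∈ {1,…,n}, where i(x) is the unique index with x ∈ A_{i(x)} and the rank of x in a set is its position in the increasing order of that set. Equivalently: every compliant binary labeling of the vertices of χ(Δ^{n−1}) has a monochromatic (n−1)-simplex, i.e., the Weak Symmetry Breaking task for n processes cannot be solved in one round, sb(n) ≥ 2. -/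
open Finset

/-- union of a list of finsets -/
def lunion {α : Type*} [DecidableEq α] (L : List (Finset α)) : Finset α := L.foldr (· ∪ ·) ∅

/-- `IsOSP A L` : `L` is an ordered set partition of the finite set `A`. -/
def IsOSP {α : Type*} [DecidableEq α] (A : Finset α) (L : List (Finset α)) : Prop :=
  (∀ B ∈ L, B.Nonempty) ∧ L.Pairwise (fun B C => Disjoint B C) ∧ lunion L = A

/-- `seenBlk L x` = `A_1 ∪ … ∪ A_{i(x)}`, the union of the blocks of `L` up to and
including the block containing `x`. -/
def seenBlk {α : Type*} [DecidableEq α] : List (Finset α) → α → Finset α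
  | [], _ => ∅
  | A :: rest, x => if x ∈ A then A else A ∪ seenBlk rest x

/-- rank (1-based position in the increasing order) of `x` in the finset `S`. -/
def rankIn (S : Finset ℕ) (x : ℕ) : ℕ := (S.filter (fun y => y ≤ x)).card

/-- the set `F(σ)` of flippable colors, for an ordered set partition of `[n] = {0,…,n}` -/
def Fset (n : ℕ) (L : List (Finset ℕ)) : Finset ℕ :=
  match L.getLast? with
  | some A => if A.card = 1 then Finset.range (n+1) \ A else Finset.range (n+1)
  | none => Finset.range (n+1)

/-- the flip `F(σ,x)` of an ordered set partition with respect to the color `x` -/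
def flipOSP (x : ℕ) : List (Finset ℕ) → List (Finset ℕ)
  | [] => []
  | A :: rest =>
    if x ∈ A then
      if 2 ≤ A.card then {x} :: A.erase x :: rest
      else
        match rest with
        | [] => [A]
        | B :: rest' => insert x B :: rest'
    else A :: flipOSP x rest

def levelAux : List ℕ → List (Finset ℕ) → Option ℕ
  | [], _ => none
  | _ :: _, [] => none
  | x :: xs, A :: As => if A = {x} then levelAux xs As else some x

/-- `levelFn Σ σ` = `level(σ,Σ)` (as an `Option`; `none` = undefined). -/
def levelFn (Sig : List ℕ) (L : List (Finset ℕ)) : Option ℕ :=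
  levelAux Sig.reverse L.reverse

/-- ordered set partitions of `[n] = {0,…,n}` -/
def OSPn (n : ℕ) : Type := {L : List (Finset ℕ) // IsOSP (Finset.range (n+1)) L}

/-- the graph `Γ_n`: vertices are the ordered set partitions of `[n]`, with `σ` and
`F(σ,x)` joined by an edge for every `x ∈ F(σ)`. -/
def Gamma (n : ℕ) : SimpleGraph (OSPn n) where
  Adj σ τ := σ ≠ τ ∧
    ((∃ x ∈ Fset n σ.1, τ.1 = flipOSP x σ.1) ∨ (∃ x ∈ Fset n τ.1, σ.1 = flipOSP x τ.1))
  symm := ⟨fun σ τ h => ⟨h.1.symm, h.2.symm⟩⟩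
  loopless := ⟨fun σ h => h.1 rfl⟩

/-- a matching: a set of edges of `G`, no two of which share a vertex -/
def IsMatchingSet {V : Type*} (G : SimpleGraph V) (M : Set (Sym2 V)) : Prop :=
  (∀ e ∈ M, e ∈ G.edgeSet) ∧ ∀ e ∈ M, ∀ f ∈ M, ∀ v : V, v ∈ e → v ∈ f → e = f

/-- a vertex is critical w.r.t. `M` if it lies in no edge of `M` -/
def CriticalVx {V : Type*} (M : Set (Sym2 V)) (v : V) : Prop := ∀ e ∈ M, v ∉ e

/-- the standard matching `M_Σ`, as a set of edges of `Γ_n` -/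
def MSigma (n : ℕ) (Sig : List ℕ) : Set (Sym2 (OSPn n)) :=
  {e | ∃ σ τ : OSPn n, ∃ x, levelFn Sig σ.1 = some x ∧ τ.1 = flipOSP x σ.1 ∧ e = s(σ, τ)}

/-- a list of edges is alternating w.r.t. `M` -/
def Alternates {V : Type*} (M : Set (Sym2 V)) (es : List (Sym2 V)) : Prop :=
  es.Chain' (fun e f => e ∈ M ↔ f ∉ M)

def IsProperlyAlternating {V : Type*} {G : SimpleGraph V} (M : Set (Sym2 V)) {u v : V}
    (p : G.Walk u v) : Prop :=
  Alternates M p.edges ∧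
  (∀ e, p.edges.head? = some e → e ∉ M → CriticalVx M u) ∧
  (∀ e, p.edges.getLast? = some e → e ∉ M → CriticalVx M v)

def IsSemiAugmenting {V : Type*} {G : SimpleGraph V} (M : Set (Sym2 V)) {u v : V}
    (p : G.Walk u v) : Prop :=
  IsProperlyAlternating M p ∧
  (∃ e, p.edges.head? = some e ∧ e ∈ M) ∧ (∃ e, p.edges.getLast? = some e ∧ e ∉ M)

def IsNonAugmenting {V : Type*} {G : SimpleGraph V} (M : Set (Sym2 V)) {u v : V}
    (p : G.Walk u v) : Prop :=
  Alternates M p.edges ∧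
  (∃ e, p.edges.head? = some e ∧ e ∈ M) ∧ (∃ e, p.edges.getLast? = some e ∧ e ∈ M)

def IsWeaklySemiAugmenting {V : Type*} {G : SimpleGraph V} (M : Set (Sym2 V)) {u v : V}
    (p : G.Walk u v) : Prop :=
  Alternates M p.edges ∧
  (p.edges = [] ∨
    ((∃ e, p.edges.head? = some e ∧ e ∈ M) ∧ (∃ e, p.edges.getLast? = some e ∧ e ∉ M)))

/-- a partial ordered set partition, as a list of pairs of blocks `(A_i, B_i)` -/
abbrev RawPOSP := List (Finset ℕ × Finset ℕ)

def carrierP (σ : RawPOSP) : Finset ℕ := (σ.map Prod.fst).foldr (· ∪ ·) ∅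
def colorsP (σ : RawPOSP) : Finset ℕ := (σ.map Prod.snd).foldr (· ∪ ·) ∅

/-- `σ` is a partial ordered set partition of `[n] = {0,…,n}` -/
def IsPOSP (n : ℕ) (σ : RawPOSP) : Prop :=
  σ ≠ [] ∧ (∀ p ∈ σ, p.2.Nonempty ∧ p.2 ⊆ p.1 ∧ p.1 ⊆ Finset.range (n+1)) ∧
  (σ.map Prod.fst).Pairwise (fun A B => Disjoint A B)

/-- view an ordered set partition as a partial one, with `B_i = A_i` -/
def toPairs (L : List (Finset ℕ)) : RawPOSP := L.map (fun A => (A, A))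

def dlAux (S : Finset ℕ) : Finset ℕ → RawPOSP → RawPOSP
  | _, [] => []
  | acc, (A, B) :: rest =>
    if B ⊆ S then dlAux S (acc ∪ A) rest
    else (acc ∪ A, B \ S) :: dlAux S ∅ rest

/-- the deletion `dl(σ, S)` -/
def dl (σ : RawPOSP) (S : Finset ℕ) : RawPOSP := dlAux S ∅ σ

/-- `D(σ, S)` = `A_i ∪ … ∪ A_t` for the minimal `i` with `B_i ∪ … ∪ B_t ⊆ S`, else `∅` -/
def Dfun (S : Finset ℕ) : RawPOSP → Finset ℕ
  | [] => ∅
  | b :: rest => if colorsP (b :: rest) ⊆ S then carrierP (b :: rest) else Dfun S rest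

def nodesAux : Finset ℕ → RawPOSP → Finset (Finset ℕ × ℕ)
  | _, [] => ∅
  | acc, (A, B) :: rest => B.image (fun x => (acc ∪ A, x)) ∪ nodesAux (acc ∪ A) rest

/-- the node set `V(σ)` of a partial ordered set partition -/
def nodesP (σ : RawPOSP) : Finset (Finset ℕ × ℕ) := nodesAux ∅ σ

/-- an ordered set partition of the whole of `[n]`, viewed as a partial one -/
def IsFullOSP (n : ℕ) (σ : RawPOSP) : Prop :=
  IsPOSP n σ ∧ carrierP σ = Finset.range (n+1) ∧ ∀ p ∈ σ, p.2 = p.1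

/-- simplices of the standard chromatic subdivision `χ(Δⁿ)` -/
def IsSimplexChi (n : ℕ) (W : Finset (Finset ℕ × ℕ)) : Prop :=
  ∃ σ : RawPOSP, IsFullOSP n σ ∧ W ⊆ nodesP σ

/-- a linked tuple of partial ordered set partitions -/
def Linked (T : List RawPOSP) : Prop := T.Chain' (fun σ τ => colorsP σ = carrierP τ)

/-- vertices of `χ^d(Δⁿ)`: linked `d`-tuples whose last entry has a singleton color set -/
def IsVertexChi (n d : ℕ) (v : List RawPOSP) : Prop :=
  v.length = d ∧ (∀ σ ∈ v, IsPOSP n σ) ∧ Linked v ∧ (colorsP (v.getLastD [])).card = 1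

/-- the `n`-simplices of `χ^d(Δⁿ)`: linked `d`-tuples of ordered set partitions of `[n]` -/
def IsTopSimplexChi (n d : ℕ) (T : List RawPOSP) : Prop :=
  T.length = d ∧ Linked T ∧
  ∀ σ ∈ T, IsPOSP n σ ∧ carrierP σ = Finset.range (n+1) ∧ ∀ p ∈ σ, p.2 = p.1

def faceAux : Finset ℕ → List RawPOSP → List RawPOSP
  | _, [] => []
  | S, σ :: rest => dl σ S :: faceAux (Dfun S σ) rest

/-- the face of the simplex `T` of `χ^d(Δⁿ)` determined by `S_d = S`:
`(dl(σ_1,S_1),…,dl(σ_d,S_d))` with `S_i = D(σ_{i+1},S_{i+1})`. -/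
def faceT (T : List RawPOSP) (S : Finset ℕ) : List RawPOSP := (faceAux S T.reverse).reverse

/-- the vertex of the `n`-simplex `T` colored `x` -/
def vertexOf (T : List RawPOSP) (x : ℕ) : List RawPOSP :=
  faceT T ((colorsP (T.getLastD [])) \ {x})

/-- relabel all elements by `f` -/
def relabel (f : ℕ → ℕ) (T : List RawPOSP) : List RawPOSP :=
  T.map (fun σ => σ.map (fun p => (p.1.image f, p.2.image f)))

/-- the unique order preserving bijection `I → J` (extended by the identity) -/
noncomputable def oMap (I J : Finset ℕ) (h : I.card = J.card) (x : ℕ) : ℕ :=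
  if hx : x ∈ I then ((J.orderIsoOfFin h.symm) ((I.orderIsoOfFin rfl).symm ⟨x, hx⟩) : ℕ)
  else x

/-- a compliant binary labeling of the vertices of `χ^d(Δⁿ)` -/
def Compliant (n d : ℕ) (lab : List RawPOSP → Bool) : Prop :=
  ∀ I J : Finset ℕ, I ⊆ Finset.range (n+1) → J ⊆ Finset.range (n+1) →
    ∀ h : I.card = J.card, ∀ v : List RawPOSP, IsVertexChi n d v →
      carrierP v.headI ⊆ I → lab (relabel (oMap I J h) v) = lab v

/-- the number of ordered set partitions of `[n] = {0,…,n}` -/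
noncomputable def fOSP (n : ℕ) : ℕ :=
  Nat.card {L : List (Finset ℕ) // IsOSP (Finset.range (n+1)) L}

/-- membership in the vertex set of `Γ_n(V)` -/
def InGammaV (V : Finset ℕ) (L : List (Finset ℕ)) : Prop :=
  ∃ A rest, L = A :: rest ∧ ¬ A ⊆ V

/-- a prefix in `V`: a tuple of nonempty pairwise disjoint subsets of `V` -/
def IsPrefixIn {α : Type*} [DecidableEq α] (V : Finset α) (P : List (Finset α)) : Prop :=
  (∀ A ∈ P, A.Nonempty ∧ A ⊆ V) ∧ P.Pairwise (fun A B => Disjoint A B)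

/-- membership in the vertex set of `Γ_n(V,𝒜)` -/
def InGammaVA (V : Finset ℕ) (P : List (Finset ℕ)) (L : List (Finset ℕ)) : Prop :=
  ∃ A rest, L = P ++ A :: rest ∧ ¬ A ⊆ V

/-- conducting bipartite graph of the first type -/
def ConductingFirst {V : Type*} (G : SimpleGraph V) (A B : Set V) : Prop :=
  A.ncard = B.ncard + 1 ∧
  ∀ v ∈ A, ∃ M : Set (Sym2 V), IsMatchingSet G M ∧ ∀ u, CriticalVx M u ↔ u = v

/-- conducting bipartite graph of the second type -/
def ConductingSecond {V : Type*} (G : SimpleGraph V) (A B : Set V) : Prop :=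
  A.ncard = B.ncard ∧
  ∀ v ∈ A, ∀ w ∈ B, ∃ M : Set (Sym2 V), IsMatchingSet G M ∧
    ∀ u, CriticalVx M u ↔ (u = v ∨ u = w)

/-- the vertex of the `n`-simplex `(As ‖ Bs)` of `χ²(Δⁿ)` colored `x` is internal -/
def InternalVx (n : ℕ) (As Bs : List (Finset ℕ)) (x : ℕ) : Prop :=
  carrierP (dl (toPairs As) (Finset.range (n+1) \ seenBlk Bs x)) = Finset.range (n+1)

/-! Induct on the size `r` of the ground set. If both colours occur among `δ r 1, …, δ r r`,
take a monochromatic partition of all but one element (of either colour, by induction) and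
append as a last block the singleton of the element whose rank `p` has `δ r p` of that colour.
Otherwise `δ r ·` is constant on `1, …, r`, and the partition into a single block works. -/

lemma rankIn_mem_Icc {S : Finset ℕ} {x : ℕ} (hx : x ∈ S) : rankIn S x ∈ Icc 1 #S :=
  mem_Icc.2 ⟨card_pos.2 ⟨x, mem_filter.2 ⟨hx, le_rfl⟩⟩, card_le_card (filter_subset _ _)⟩

lemma rankIn_strictMonoOn (S : Finset ℕ) : StrictMonoOn (rankIn S) S := by
  intro x _ y hy hxy
  refine card_lt_card ⟨fun z hz => ?_, fun h => ?_⟩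
  · rw [mem_filter] at hz ⊢
    exact ⟨hz.1, hz.2.trans hxy.le⟩
  · exact absurd (mem_filter.1 (h (mem_filter.2 ⟨hy, le_rfl⟩))).2 (not_le.2 hxy)

lemma image_rankIn (S : Finset ℕ) : S.image (rankIn S) = Icc 1 #S := by
  refine eq_of_subset_of_card_le (image_subset_iff.2 fun _ => rankIn_mem_Icc) ?_
  rw [card_image_of_injOn (rankIn_strictMonoOn S).injOn, Nat.card_Icc, Nat.add_sub_cancel]

lemma exists_rankIn_eq {S : Finset ℕ} {p : ℕ} (hp : p ∈ Icc 1 #S) : ∃ x ∈ S, rankIn S x = p :=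
  mem_image.1 (image_rankIn S ▸ hp)

section OrderedSetPartition

variable {α : Type*} [DecidableEq α]

lemma lunion_append (L M : List (Finset α)) : lunion (L ++ M) = lunion L ∪ lunion M := by
  induction L with
  | nil => simp [lunion]
  | cons A L ih =>
    simp only [lunion, List.cons_append, List.foldr_cons] at ih ⊢
    rw [ih, union_assoc]

lemma subset_lunion {L : List (Finset α)} {A : Finset α} (hA : A ∈ L) : A ⊆ lunion L := by
  induction L with
  | nil => simp at hA
  | cons B L ih =>
    rcases List.mem_cons.1 hA with rfl | hA
    · exact subset_union_left
    · exact (ih hA).trans subset_union_right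

lemma IsOSP.append_singleton {S B : Finset α} {L : List (Finset α)} (hL : IsOSP S L)
    (hB : B.Nonempty) (hSB : Disjoint S B) : IsOSP (S ∪ B) (L ++ [B]) := by
  obtain ⟨hne, hpw, hun⟩ := hL
  refine ⟨?_, ?_, by rw [lunion_append, hun]; simp [lunion]⟩
  · simpa [or_imp, forall_and] using ⟨hne, hB⟩
  · refine List.pairwise_append.2 ⟨hpw, List.pairwise_singleton _ _, ?_⟩
    rintro A hA _ hC
    rw [List.mem_singleton.1 hC]
    exact hSB.mono_left (hun ▸ subset_lunion hA)

lemma seenBlk_append_of_mem {L : List (Finset α)} {x : α} (M : List (Finset α))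
    (hx : x ∈ lunion L) : seenBlk (L ++ M) x = seenBlk L x := by
  induction L with
  | nil => simp [lunion] at hx
  | cons A L ih =>
    by_cases hA : x ∈ A
    · simp [seenBlk, hA]
    · simp only [lunion, List.foldr_cons, mem_union, hA, false_or] at hx
      simp [seenBlk, hA, ih hx]

lemma seenBlk_append_of_not_mem {L : List (Finset α)} {x : α} (M : List (Finset α))
    (hx : x ∉ lunion L) : seenBlk (L ++ M) x = lunion L ∪ seenBlk M x := by
  induction L with
  | nil => simp [lunion]
  | cons A L ih =>
    simp only [lunion, List.foldr_cons, mem_union, not_or] at hx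
    simp only [List.cons_append, seenBlk, if_neg hx.1, ih hx.2, lunion, List.foldr_cons,
      union_assoc]

end OrderedSetPartition

section Monochromatic

variable {C : Type*}

def HasMonochromaticOSP (δ : ℕ → ℕ → C) (c : C) (r : ℕ) : Prop :=
  ∀ S : Finset ℕ, #S = r → ∃ L, IsOSP S L ∧ ∀ x ∈ S, δ #(seenBlk L x) (rankIn (seenBlk L x) x) = c

lemma hasMonochromaticOSP_zero (δ : ℕ → ℕ → C) (c : C) : HasMonochromaticOSP δ c 0 := by
  intro S hS
  rw [card_eq_zero.1 hS]
  exact ⟨[], ⟨by simp, by simp, rfl⟩, by simp⟩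

lemma hasMonochromaticOSP_of_forall {δ : ℕ → ℕ → C} {c : C} {r : ℕ} (hr : 0 < r)
    (hδ : ∀ p ∈ Icc 1 r, δ r p = c) : HasMonochromaticOSP δ c r := by
  intro S hS
  refine ⟨[S], ⟨by simpa [← card_pos, hS], by simp, by simp [lunion]⟩, fun x hx => ?_⟩
  have hseen : seenBlk [S] x = S := by simp [seenBlk, hx]
  rw [hseen, hS]
  exact hδ _ (hS ▸ rankIn_mem_Icc hx)

lemma HasMonochromaticOSP.succ {δ : ℕ → ℕ → C} {c : C} {r : ℕ} (hr : HasMonochromaticOSP δ c r)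
    {p : ℕ} (hp : p ∈ Icc 1 (r + 1)) (hδ : δ (r + 1) p = c) :
    HasMonochromaticOSP δ c (r + 1) := by
  intro S hS
  obtain ⟨x, hxS, hrank⟩ := exists_rankIn_eq (hS ▸ hp)
  obtain ⟨L, hLS, hL⟩ := hr (S.erase x) (by rw [card_erase_of_mem hxS, hS]; rfl)
  have hun : lunion L = S.erase x := hLS.2.2
  have hOSP := hLS.append_singleton (singleton_nonempty x) (by simp)
  rw [union_comm, ← insert_eq, insert_erase hxS] at hOSP
  refine ⟨L ++ [{x}], hOSP, fun y hy => ?_⟩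
  by_cases hyx : y = x
  · subst hyx
    rw [seenBlk_append_of_not_mem _ (by simp [hun])]
    simp [seenBlk, hun, insert_erase hxS, hS, hrank, hδ]
  · rw [seenBlk_append_of_mem _ (hun ▸ mem_erase.2 ⟨hyx, hy⟩)]
    exact hL y (mem_erase.2 ⟨hyx, hy⟩)

end Monochromatic

lemma exists_hasMonochromaticOSP (δ : ℕ → ℕ → Fin 2) (r : ℕ) :
    ∃ c, HasMonochromaticOSP δ c r := by
  induction r with
  | zero => exact ⟨0, hasMonochromaticOSP_zero δ 0⟩
  | succ r ih =>
    by_cases hboth : ∀ c, ∃ p ∈ Icc 1 (r + 1), δ (r + 1) p = c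
    · obtain ⟨c, hc⟩ := ih
      obtain ⟨p, hp, hδ⟩ := hboth c
      exact ⟨c, hc.succ hp hδ⟩
    · push Not at hboth
      obtain ⟨c, hc⟩ := hboth
      refine ⟨c + 1, hasMonochromaticOSP_of_forall r.succ_pos fun p hp => ?_⟩
      have := hc p hp
      omega

theorem statement1_general (n : ℕ) (δ : ℕ → ℕ → Fin 2) :
    ∃ L : List (Finset ℕ), IsOSP (Finset.Icc 1 n) L ∧
      ∃ c : Fin 2, ∀ x ∈ Finset.Icc 1 n,
        δ (seenBlk L x).card (rankIn (seenBlk L x) x) = c := by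
  obtain ⟨c, hc⟩ := exists_hasMonochromaticOSP δ n
  obtain ⟨L, hL, hmono⟩ := hc (Icc 1 n) (by simp)
  exact ⟨L, hL, c, hmono⟩

/-- For every `n ≥ 2` and every `δ`, there is an ordered set partition of `{1,…,n}`
on which the induced labeling `x ↦ δ(|A_1∪…∪A_{i(x)}|, rank of x therein)` is constant:
Weak Symmetry Breaking cannot be solved in one round, `sb(n) ≥ 2`. -/
theorem statement1 (n : ℕ) (hn : 2 ≤ n) (δ : ℕ → ℕ → Fin 2) :
    ∃ L : List (Finset ℕ), IsOSP (Finset.Icc 1 n) L ∧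
      ∃ c : Fin 2, ∀ x ∈ Finset.Icc 1 n,
        δ (seenBlk L x).card (rankIn (seenBlk L x) x) = c :=
  statement1_general n δ
end

section
/- Let σ be a partial ordered set partition of [n]. (1) For every nonempty S ⊊ C(σ), the deletion dl(σ,S) is again a partial ordered set partition of [n] satisfying: (a) C(dl(σ,S)) = C(σ)∖S; (b) dim dl(σ,S) = dim σ − |S|; (c) carrier(dl(σ,S)) ⊆ carrier(σ). (2) If S and T are disjoint nonempty subsets of C(σ) with S∪T ≠ C(σ), then dl(dl(σ,S),T) = dl(σ, S∪T). -/
open Finset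

/-!
Deletion scans the blocks from left to right, merging every block whose colors lie in `S` into
the next surviving block; `acc` carries the carrier merged so far. Every claim is an induction
on the list of blocks with `acc` generalized. Deleting `S` and then `T` merges exactly the
blocks whose colors lie in `S ∪ T`, because `B \ S ⊆ T ↔ B ⊆ S ∪ T`.
-/

section Deletion

variable {n : ℕ} {S T : Finset ℕ}

@[simp] lemma carrierP_nil : carrierP [] = ∅ := rfl

@[simp] lemma colorsP_nil : colorsP [] = ∅ := rfl

@[simp] lemma carrierP_cons (p : Finset ℕ × Finset ℕ) (σ : RawPOSP) :
    carrierP (p :: σ) = p.1 ∪ carrierP σ := rfl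

@[simp] lemma colorsP_cons (p : Finset ℕ × Finset ℕ) (σ : RawPOSP) :
    colorsP (p :: σ) = p.2 ∪ colorsP σ := rfl

lemma mem_carrierP {x : ℕ} {σ : RawPOSP} : x ∈ carrierP σ ↔ ∃ p ∈ σ, x ∈ p.1 := by
  induction σ with
  | nil => simp
  | cons q σ ih => simp [ih]

lemma disjoint_carrierP {X : Finset ℕ} {σ : RawPOSP} (h : ∀ p ∈ σ, Disjoint X p.1) :
    Disjoint X (carrierP σ) := by
  refine Finset.disjoint_right.2 fun x hx => ?_
  obtain ⟨p, hp, hxp⟩ := mem_carrierP.1 hx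
  exact Finset.disjoint_right.1 (h p hp) hxp

lemma colorsP_dlAux (σ : RawPOSP) (acc : Finset ℕ) :
    colorsP (dlAux S acc σ) = colorsP σ \ S := by
  induction σ generalizing acc with
  | nil => simp [dlAux]
  | cons p σ ih =>
    obtain ⟨A, B⟩ := p
    by_cases h : B ⊆ S
    · simp [dlAux, h, ih, Finset.union_sdiff_distrib, Finset.sdiff_eq_empty_iff_subset.2 h]
    · simp [dlAux, h, ih, Finset.union_sdiff_distrib]

lemma carrierP_dlAux_subset (σ : RawPOSP) (acc : Finset ℕ) :
    carrierP (dlAux S acc σ) ⊆ acc ∪ carrierP σ := by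
  induction σ generalizing acc with
  | nil => simp [dlAux]
  | cons p σ ih =>
    obtain ⟨A, B⟩ := p
    by_cases h : B ⊆ S
    · simpa [dlAux, h, Finset.union_assoc] using ih (acc ∪ A)
    · simp only [dlAux, h, if_false, carrierP_cons]
      have := ih ∅
      rw [Finset.empty_union] at this
      grind

lemma forall_mem_dlAux {σ : RawPOSP} {acc : Finset ℕ}
    (hσ : ∀ p ∈ σ, p.2.Nonempty ∧ p.2 ⊆ p.1 ∧ p.1 ⊆ Finset.range (n+1))
    (hacc : acc ⊆ Finset.range (n+1)) :
    ∀ p ∈ dlAux S acc σ, p.2.Nonempty ∧ p.2 ⊆ p.1 ∧ p.1 ⊆ Finset.range (n+1) := by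
  induction σ generalizing acc with
  | nil => simp [dlAux]
  | cons q σ ih =>
    obtain ⟨A, B⟩ := q
    obtain ⟨-, hBA, hA⟩ := hσ (A, B) List.mem_cons_self
    have hσ' := fun p hp => hσ p (List.mem_cons_of_mem _ hp)
    by_cases h : B ⊆ S
    · simpa [dlAux, h] using ih hσ' (Finset.union_subset hacc hA)
    · simp only [dlAux, h, if_false, List.forall_mem_cons]
      refine ⟨⟨?_, ?_, Finset.union_subset hacc hA⟩, ih hσ' (Finset.empty_subset _)⟩
      · exact Finset.sdiff_nonempty.2 h
      · exact Finset.sdiff_subset.trans (hBA.trans Finset.subset_union_right)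

lemma pairwise_disjoint_dlAux {σ : RawPOSP} {acc : Finset ℕ}
    (hσ : (σ.map Prod.fst).Pairwise Disjoint) (hacc : ∀ p ∈ σ, Disjoint acc p.1) :
    ((dlAux S acc σ).map Prod.fst).Pairwise Disjoint := by
  induction σ generalizing acc with
  | nil => simp [dlAux]
  | cons q σ ih =>
    obtain ⟨A, B⟩ := q
    rw [List.map_cons, List.pairwise_cons, List.forall_mem_map] at hσ
    have hacc' : ∀ p ∈ σ, Disjoint (acc ∪ A) p.1 := fun p hp =>
      Finset.disjoint_union_left.2 ⟨hacc p (List.mem_cons_of_mem _ hp), hσ.1 p hp⟩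
    by_cases h : B ⊆ S
    · simpa [dlAux, h] using ih hσ.2 hacc'
    · simp only [dlAux, h, if_false, List.map_cons, List.pairwise_cons, List.forall_mem_map]
      refine ⟨fun p hp => ?_, ih hσ.2 fun p _ => Finset.disjoint_empty_left _⟩
      have hp : p.1 ⊆ carrierP σ := fun x hx => by
        simpa using carrierP_dlAux_subset (S := S) σ ∅ (mem_carrierP.2 ⟨p, hp, hx⟩)
      exact (disjoint_carrierP hacc').mono_right hp

lemma dlAux_dlAux (σ : RawPOSP) (C D : Finset ℕ) :
    dlAux T C (dlAux S D σ) = dlAux (S ∪ T) (C ∪ D) σ := by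
  induction σ generalizing C D with
  | nil => simp [dlAux]
  | cons p σ ih =>
    obtain ⟨A, B⟩ := p
    have hST : B \ S ⊆ T ↔ B ⊆ S ∪ T := sdiff_le_iff
    by_cases hS : B ⊆ S
    · simp [dlAux, hS, Finset.subset_union_left.trans' hS, ih, Finset.union_assoc]
    · by_cases hT : B ⊆ S ∪ T
      · simp [dlAux, hS, hT, hST.2 hT, ih]
      · simp [dlAux, hS, hT, mt hST.1 hT, ih, sdiff_sdiff_left]

lemma colorsP_dl (σ : RawPOSP) (S : Finset ℕ) : colorsP (dl σ S) = colorsP σ \ S :=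
  colorsP_dlAux σ ∅

lemma carrierP_dl_subset (σ : RawPOSP) (S : Finset ℕ) : carrierP (dl σ S) ⊆ carrierP σ := by
  simpa [dl] using carrierP_dlAux_subset (S := S) σ ∅

lemma isPOSP_dl {σ : RawPOSP} (hσ : IsPOSP n σ) (hS : S ⊂ colorsP σ) : IsPOSP n (dl σ S) := by
  obtain ⟨-, hblocks, hdisj⟩ := hσ
  refine ⟨fun hnil => ?_, forall_mem_dlAux hblocks (Finset.empty_subset _),
    pairwise_disjoint_dlAux hdisj fun p _ => Finset.disjoint_empty_left _⟩
  have hcol := colorsP_dl σ S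
  rw [hnil, colorsP_nil, eq_comm, Finset.sdiff_eq_empty_iff_subset] at hcol
  exact hS.not_subset hcol

lemma dl_dl (σ : RawPOSP) (S T : Finset ℕ) : dl (dl σ S) T = dl σ (S ∪ T) := by
  simpa [dl] using dlAux_dlAux (S := S) (T := T) σ ∅ ∅

end Deletion

/-- Properties of the deletion operation on partial ordered set partitions. -/
theorem statement3 (n : ℕ) (σ : RawPOSP) (hσ : IsPOSP n σ) :
    (∀ S : Finset ℕ, S.Nonempty → S ⊂ colorsP σ →
      IsPOSP n (dl σ S) ∧
      colorsP (dl σ S) = colorsP σ \ S ∧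
      ((colorsP (dl σ S)).card : ℤ) - 1 = ((colorsP σ).card : ℤ) - 1 - S.card ∧
      carrierP (dl σ S) ⊆ carrierP σ) ∧
    (∀ S T : Finset ℕ, S.Nonempty → T.Nonempty → Disjoint S T →
      S ⊆ colorsP σ → T ⊆ colorsP σ → S ∪ T ≠ colorsP σ →
      dl (dl σ S) T = dl σ (S ∪ T)) := by
  refine ⟨fun S _ hS => ?_, fun S T _ _ _ _ _ _ => dl_dl σ S T⟩
  refine ⟨isPOSP_dl hσ hS, colorsP_dl σ S, ?_, carrierP_dl_subset σ S⟩
  rw [colorsP_dl, Finset.card_sdiff_of_subset hS.subset,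
    Nat.cast_sub (Finset.card_le_card hS.subset)]
  ring
end

section
/- If σ and τ are partial ordered set partitions of [n] with equal node sets V(σ) = V(τ), then σ = τ. -/
open Finset

/-!
Every node of `σ = ((A₁|…|A_t),(B₁|…|B_t))` has first coordinate containing `A₁`, with
equality exactly for the nodes `(A₁, x)`, `x ∈ B₁`, since later blocks contain a color outside
`A₁`. So `A₁` and `B₁` are read off `V(σ)`, and the remaining nodes are those of the tail of `σ`
(relative to the accumulated union `A₁`), which is determined by induction.
-/

/-- `IsPOSPAfter acc σ`: `σ` is the tail of a partial ordered set partition whose earlier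
blocks have union `acc`. -/
inductive IsPOSPAfter : Finset ℕ → RawPOSP → Prop
  | nil (acc : Finset ℕ) : IsPOSPAfter acc []
  | cons {acc A B : Finset ℕ} {rest : RawPOSP} (hB : B.Nonempty) (hBA : B ⊆ A)
      (hdisj : Disjoint acc A) (hrest : IsPOSPAfter (acc ∪ A) rest) :
      IsPOSPAfter acc ((A, B) :: rest)

lemma isPOSPAfter_of_forall {acc : Finset ℕ} {σ : RawPOSP}
    (hblocks : ∀ p ∈ σ, p.2.Nonempty ∧ p.2 ⊆ p.1) (hacc : ∀ p ∈ σ, Disjoint acc p.1)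
    (hpw : (σ.map Prod.fst).Pairwise Disjoint) : IsPOSPAfter acc σ := by
  induction σ generalizing acc with
  | nil => exact .nil acc
  | cons p rest ih =>
    obtain ⟨A, B⟩ := p
    rw [List.map_cons, List.pairwise_cons, List.forall_mem_map] at hpw
    obtain ⟨hB, hBA⟩ := hblocks _ List.mem_cons_self
    refine .cons hB hBA (hacc _ List.mem_cons_self) (ih (fun p hp => ?_) (fun p hp => ?_) hpw.2)
    · exact hblocks p (List.mem_cons_of_mem _ hp)
    · exact disjoint_union_left.2 ⟨hacc p (List.mem_cons_of_mem _ hp), hpw.1 p hp⟩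

lemma IsPOSP.isPOSPAfter_empty {n : ℕ} {σ : RawPOSP} (hσ : IsPOSP n σ) : IsPOSPAfter ∅ σ :=
  isPOSPAfter_of_forall (fun p hp => ⟨(hσ.2.1 p hp).1, (hσ.2.1 p hp).2.1⟩)
    (fun _ _ => disjoint_empty_left _) hσ.2.2

lemma mem_nodesAux_cons {s : Finset ℕ × ℕ} {acc A B : Finset ℕ} {rest : RawPOSP} :
    s ∈ nodesAux acc ((A, B) :: rest) ↔
      (s.1 = acc ∪ A ∧ s.2 ∈ B) ∨ s ∈ nodesAux (acc ∪ A) rest := by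
  obtain ⟨S, x⟩ := s
  simp [nodesAux, and_comm, eq_comm]

lemma subset_fst_of_mem_nodesAux {acc : Finset ℕ} {σ : RawPOSP} {s : Finset ℕ × ℕ}
    (hs : s ∈ nodesAux acc σ) : acc ⊆ s.1 := by
  induction σ generalizing acc with
  | nil => simp [nodesAux] at hs
  | cons p rest ih =>
    obtain ⟨A, B⟩ := p
    rcases mem_nodesAux_cons.1 hs with ⟨hS, -⟩ | hs
    · exact hS ▸ subset_union_left
    · exact subset_union_left.trans (ih hs)

lemma union_subset_fst_of_mem_nodesAux_cons {acc A B : Finset ℕ} {rest : RawPOSP}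
    {s : Finset ℕ × ℕ} (hs : s ∈ nodesAux acc ((A, B) :: rest)) : acc ∪ A ⊆ s.1 := by
  rcases mem_nodesAux_cons.1 hs with ⟨hS, -⟩ | hs
  · exact hS.ge
  · exact subset_fst_of_mem_nodesAux hs

lemma IsPOSPAfter.ssubset_fst_of_mem_nodesAux {acc : Finset ℕ} {σ : RawPOSP}
    (hσ : IsPOSPAfter acc σ) {s : Finset ℕ × ℕ} (hs : s ∈ nodesAux acc σ) : acc ⊂ s.1 := by
  cases hσ with
  | nil => simp [nodesAux] at hs
  | @cons _ A B _ hB hBA hdisj _ =>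
    obtain ⟨x, hx⟩ := hB
    have hxA : x ∉ acc := disjoint_right.1 hdisj (hBA hx)
    have hgrow : acc ⊂ acc ∪ A :=
      (ssubset_iff_of_subset subset_union_left).2 ⟨x, mem_union_right _ (hBA hx), hxA⟩
    exact hgrow.trans_subset (union_subset_fst_of_mem_nodesAux_cons hs)

lemma nodesAux_cons_nonempty {acc A B : Finset ℕ} {rest : RawPOSP} (hB : B.Nonempty) :
    (nodesAux acc ((A, B) :: rest)).Nonempty :=
  let ⟨x, hx⟩ := hB
  ⟨(acc ∪ A, x), mem_nodesAux_cons.2 (.inl ⟨rfl, hx⟩)⟩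

lemma union_subset_of_nodesAux_cons_eq {acc A A' B B' : Finset ℕ} {rest rest' : RawPOSP}
    (hB : B.Nonempty) (h : nodesAux acc ((A, B) :: rest) = nodesAux acc ((A', B') :: rest')) :
    acc ∪ A' ⊆ acc ∪ A := by
  obtain ⟨x, hx⟩ := hB
  have hmem : (acc ∪ A, x) ∈ nodesAux acc ((A', B') :: rest') :=
    h ▸ mem_nodesAux_cons.2 (.inl ⟨rfl, hx⟩)
  exact union_subset_fst_of_mem_nodesAux_cons hmem

lemma IsPOSPAfter.filter_nodesAux_fst_eq {acc A B : Finset ℕ} {rest : RawPOSP}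
    (h : IsPOSPAfter acc ((A, B) :: rest)) :
    (nodesAux acc ((A, B) :: rest)).filter (·.1 = acc ∪ A) = B.image (acc ∪ A, ·) := by
  cases h with | cons _ _ _ hrest =>
  ext ⟨S, x⟩
  have htail : (S, x) ∈ nodesAux (acc ∪ A) rest → S ≠ acc ∪ A :=
    fun hs => (hrest.ssubset_fst_of_mem_nodesAux hs).ne'
  simp only [mem_filter, mem_nodesAux_cons, mem_image, Prod.mk.injEq]
  grind

lemma IsPOSPAfter.filter_nodesAux_fst_ne {acc A B : Finset ℕ} {rest : RawPOSP}
    (h : IsPOSPAfter acc ((A, B) :: rest)) :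
    (nodesAux acc ((A, B) :: rest)).filter (·.1 ≠ acc ∪ A) = nodesAux (acc ∪ A) rest := by
  cases h with | cons _ _ _ hrest =>
  ext s
  have htail : s ∈ nodesAux (acc ∪ A) rest → s.1 ≠ acc ∪ A :=
    fun hs => (hrest.ssubset_fst_of_mem_nodesAux hs).ne'
  simp only [mem_filter, mem_nodesAux_cons]
  grind

theorem IsPOSPAfter.nodesAux_injective {acc : Finset ℕ} {σ τ : RawPOSP}
    (hσ : IsPOSPAfter acc σ) (hτ : IsPOSPAfter acc τ) (h : nodesAux acc σ = nodesAux acc τ) :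
    σ = τ := by
  induction hσ generalizing τ with
  | nil =>
    cases hτ with
    | nil => rfl
    | cons hB' => exact absurd h.symm (nodesAux_cons_nonempty hB').ne_empty
  | @cons acc A B rest hB hBA hdisj hrest ih =>
    cases hτ with
    | nil => exact absurd h (nodesAux_cons_nonempty hB).ne_empty
    | @cons _ A' B' rest' hB' hBA' hdisj' hrest' =>
      have hσ := IsPOSPAfter.cons hB hBA hdisj hrest
      have hτ := IsPOSPAfter.cons hB' hBA' hdisj' hrest'
      have hU : acc ∪ A = acc ∪ A' :=
        (union_subset_of_nodesAux_cons_eq hB' h.symm).antisymm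
          (union_subset_of_nodesAux_cons_eq hB h)
      obtain rfl : A = A' := by
        rw [← union_sdiff_cancel_left hdisj, hU, union_sdiff_cancel_left hdisj']
      obtain rfl : B = B' := image_injective (Prod.mk_right_injective _) <| by
        rw [← hσ.filter_nodesAux_fst_eq, h, hτ.filter_nodesAux_fst_eq]
      rw [ih hrest' (by rw [← hσ.filter_nodesAux_fst_ne, h, hτ.filter_nodesAux_fst_ne])]

/-- A partial ordered set partition of `[n]` is determined by its node set. -/
theorem statement4 (n : ℕ) (σ τ : RawPOSP) (hσ : IsPOSP n σ) (hτ : IsPOSP n τ)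
    (h : nodesP σ = nodesP τ) : σ = τ :=
  hσ.isPOSPAfter_empty.nodesAux_injective hτ.isPOSPAfter_empty h
end
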